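/- arXiv:2101.00365 — 7 statements merged into one kernel-verified Lean document; each statement's English description precedes it below -/
import Mathlib

section
/- Let A →α B →β C be an exact sequence of modules with Frobenius actions and Frobenius-equivariant maps. If HSL(A) = a and HSL(C) = c are finite (where HSL(M) is the least e such that ρ^e kills the orbit closure of 0 in M) and ker(α) is nilpotent, then HSL(B) ≤ a + c. -/
/-- If `A →α B →β C` is exact with Frobenius-equivariant maps, `HSL A = a` and `HSL C = c`
are finite (i.e. `ρ^a`, resp. `ρ^c`, kills the orbit closure of `0`), and `ker α` is
nilpotent, then `HSL B ≤ a + c`. -/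
theorem stmt_3 {R A B C : Type*} [CommRing R]
    [AddCommGroup A] [AddCommGroup B] [AddCommGroup C]
    [Module R A] [Module R B] [Module R C]
    (p : ℕ) [Fact p.Prime] [CharP R p]
    (ρA : A →+ A) (ρB : B →+ B) (ρC : C →+ C)
    (hρA : ∀ (r : R) (x : A), ρA (r • x) = r ^ p • ρA x)
    (hρB : ∀ (r : R) (x : B), ρB (r • x) = r ^ p • ρB x)
    (hρC : ∀ (r : R) (x : C), ρC (r • x) = r ^ p • ρC x)
    (α : A →ₗ[R] B) (β : B →ₗ[R] C)
    (hex : Function.Exact α β)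
    (hαρ : ∀ x, α (ρA x) = ρB (α x)) (hβρ : ∀ x, β (ρB x) = ρC (β x))
    (a c : ℕ)
    (ha : ∀ m : A, (∃ e : ℕ, (⇑ρA)^[e] m = 0) → (⇑ρA)^[a] m = 0)
    (hc : ∀ m : C, (∃ e : ℕ, (⇑ρC)^[e] m = 0) → (⇑ρC)^[c] m = 0)
    (hker : ∀ x : A, α x = 0 → ∃ e : ℕ, (⇑ρA)^[e] x = 0) :
    ∀ m : B, (∃ e : ℕ, (⇑ρB)^[e] m = 0) → (⇑ρB)^[a + c] m = 0 := by
  have hβn : ∀ (n : ℕ) (x : B), β ((⇑ρB)^[n] x) = (⇑ρC)^[n] (β x) := by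
    intro n
    induction n with
    | zero => intro x; simp
    | succ n ih =>
      intro x
      rw [Function.iterate_succ_apply, Function.iterate_succ_apply, ← hβρ, ih]
  have hαn : ∀ (n : ℕ) (x : A), α ((⇑ρA)^[n] x) = (⇑ρB)^[n] (α x) := by
    intro n
    induction n with
    | zero => intro x; simp
    | succ n ih =>
      intro x
      rw [Function.iterate_succ_apply, Function.iterate_succ_apply, ← hαρ, ih]
  rintro m ⟨e, he⟩
  -- β m is nilpotent, so ρC^c (β m) = 0
  have h1 : (⇑ρC)^[c] (β m) = 0 := by
    refine hc _ ⟨e, ?_⟩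
    rw [← hβn, he, map_zero]
  -- so ρB^c m ∈ ker β = range α
  have h2 : β ((⇑ρB)^[c] m) = 0 := by rw [hβn]; exact h1
  obtain ⟨x, hx⟩ := (hex _).mp h2
  -- α (ρA^e x) = ρB^e (ρB^c m) = ρB^(e+c) m, which is 0 since ρB^e m = 0
  have h3 : α ((⇑ρA)^[e] x) = 0 := by
    rw [hαn, hx, ← Function.iterate_add_apply, Nat.add_comm,
      Function.iterate_add_apply, he]
    simp
  obtain ⟨f, hf⟩ := hker _ h3
  have h4 : (⇑ρA)^[a] x = 0 := by
    refine ha _ ⟨f + e, ?_⟩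
    rw [Function.iterate_add_apply]; exact hf
  calc (⇑ρB)^[a + c] m = (⇑ρB)^[a] ((⇑ρB)^[c] m) := Function.iterate_add_apply _ a c m
    _ = α ((⇑ρA)^[a] x) := by rw [hαn, hx]
    _ = 0 := by rw [h4, map_zero]
end

section
/- Let A →α B →β C be an exact sequence of modules with Frobenius actions and Frobenius-equivariant maps. Then α^{-1}(0^ρ_B) = 0^ρ_A if and only if ker(α) is a nilpotent submodule of A. -/
/-- For an exact sequence `A →α B →β C` of modules with Frobenius actions and equivariant
maps: `α⁻¹(0^ρ_B) = 0^ρ_A` iff `ker α` is a nilpotent submodule of `A`. -/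
theorem stmt_4 {R A B C : Type*} [CommRing R]
    [AddCommGroup A] [AddCommGroup B] [AddCommGroup C]
    [Module R A] [Module R B] [Module R C]
    (p : ℕ) [Fact p.Prime] [CharP R p]
    (ρA : A →+ A) (ρB : B →+ B) (ρC : C →+ C)
    (hρA : ∀ (r : R) (x : A), ρA (r • x) = r ^ p • ρA x)
    (hρB : ∀ (r : R) (x : B), ρB (r • x) = r ^ p • ρB x)
    (hρC : ∀ (r : R) (x : C), ρC (r • x) = r ^ p • ρC x)
    (α : A →ₗ[R] B) (β : B →ₗ[R] C)
    (hex : Function.Exact α β)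
    (hαρ : ∀ x, α (ρA x) = ρB (α x)) (hβρ : ∀ x, β (ρB x) = ρC (β x)) :
    ((⇑α) ⁻¹' {b : B | ∃ e : ℕ, (⇑ρB)^[e] b = 0} = {x : A | ∃ e : ℕ, (⇑ρA)^[e] x = 0}) ↔
      (∀ x : A, α x = 0 → ∃ e : ℕ, (⇑ρA)^[e] x = 0) := by
  have key : ∀ (e : ℕ) (x : A), α ((⇑ρA)^[e] x) = (⇑ρB)^[e] (α x) := by
    intro e
    induction e with
    | zero => intro x; simp
    | succ n ih =>
      intro x
      rw [Function.iterate_succ_apply, Function.iterate_succ_apply, ih, hαρ]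
  constructor
  · intro h x hx
    have : x ∈ (⇑α) ⁻¹' {b : B | ∃ e : ℕ, (⇑ρB)^[e] b = 0} := ⟨0, by simp [hx]⟩
    rw [h] at this
    exact this
  · intro h
    ext x
    constructor
    · rintro ⟨e, he⟩
      rw [← key] at he
      obtain ⟨e', he'⟩ := h _ he
      exact ⟨e' + e, by rw [Function.iterate_add_apply]; exact he'⟩
    · rintro ⟨e, he⟩
      exact ⟨e, by rw [← key, he, map_zero]⟩
end

section
/- Let (M,ρ_M) and (N,ρ_N) be ℤ-graded modules with graded Frobenius actions over graded k-algebras of characteristic p, and give the Segre product M # N = ⊕_n M_n ⊗_k N_n the diagonal Frobenius action ρ(m ⊗ n) = ρ_M(m) ⊗ ρ_N(n). Then the nil-support of M # N equals nilsupp(M) ∩ nilsupp(N); i.e., M # N fails to be nilpotent in degree t if and only if both M and N fail to be nilpotent in degree t. -/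
open TensorProduct

/-- tensor of nonzero vectors over a field is nonzero -/
lemma aux_tmul_ne_zero {k M N : Type*} [Field k]
    [AddCommGroup M] [Module k M] [AddCommGroup N] [Module k N]
    {a : M} {b : N} (ha : a ≠ 0) (hb : b ≠ 0) : a ⊗ₜ[k] b ≠ 0 := by
  obtain ⟨f, hf⟩ := not_forall.mp (mt (Module.forall_dual_apply_eq_zero_iff k a).mp ha)
  obtain ⟨g, hg⟩ := not_forall.mp (mt (Module.forall_dual_apply_eq_zero_iff k b).mp hb)
  intro h
  have : ((TensorProduct.lid k k).toLinearMap ∘ₗ TensorProduct.map f g)  (a ⊗ₜ[k] b) = 0 := by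
    rw [h]; simp
  simp [TensorProduct.lid_tmul] at this
  tauto

/-- The nil-support of a Segre product `M # N` (with the diagonal Frobenius action) equals
`nilsupp M ∩ nilsupp N`: the Segre product fails to be nilpotent in degree `t` iff both
`M` and `N` fail to be nilpotent in degree `t`. Here the degree-`t` Segre piece is the
span of simple tensors `m ⊗ n` with `m ∈ M_t` and `n ∈ N_t` inside `M ⊗_k N`. -/
theorem stmt_10 {k M N : Type*} [Field k] (p : ℕ) [Fact p.Prime] [CharP k p]
    [AddCommGroup M] [Module k M] [AddCommGroup N] [Module k N]
    (MG : ℤ → Submodule k M) (NG : ℤ → Submodule k N)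
    (ρM : M →+ M) (ρN : N →+ N)
    (hρM : ∀ (c : k) (m : M), ρM (c • m) = c ^ p • ρM m)
    (hρN : ∀ (c : k) (n : N), ρN (c • n) = c ^ p • ρN n)
    (hMG : ∀ (t : ℤ), ∀ m ∈ MG t, ρM m ∈ MG (t * (p : ℤ)))
    (hNG : ∀ (t : ℤ), ∀ n ∈ NG t, ρN n ∈ NG (t * (p : ℤ)))
    (ρT : M ⊗[k] N →+ M ⊗[k] N)
    (hρT : ∀ (m : M) (n : N), ρT (m ⊗ₜ[k] n) = ρM m ⊗ₜ[k] ρN n) :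
    {t : ℤ | ∃ x ∈ Submodule.span k
        {y : M ⊗[k] N | ∃ m ∈ MG t, ∃ n ∈ NG t, y = m ⊗ₜ[k] n},
        ∀ e : ℕ, (⇑ρT)^[e] x ≠ 0} =
      {t : ℤ | ∃ m ∈ MG t, ∀ e : ℕ, (⇑ρM)^[e] m ≠ 0} ∩
        {t : ℤ | ∃ n ∈ NG t, ∀ e : ℕ, (⇑ρN)^[e] n ≠ 0} := by
  -- iterate formula on simple tensors
  have hiter : ∀ (e : ℕ) (a : M) (b : N),
      (⇑ρT)^[e] (a ⊗ₜ[k] b) = (⇑ρM)^[e] a ⊗ₜ[k] (⇑ρN)^[e] b := by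
    intro e
    induction e with
    | zero => intro a b; simp
    | succ e ih =>
        intro a b
        rw [Function.iterate_succ_apply, hρT, ih, Function.iterate_succ_apply,
          Function.iterate_succ_apply]
  -- ρT is p-semilinear
  have hsmul : ∀ (c : k) (x : M ⊗[k] N), ρT (c • x) = c ^ p • ρT x := by
    intro c x
    induction x with
    | zero => simp
    | tmul a b =>
        rw [TensorProduct.smul_tmul', hρT, hρT, hρM, TensorProduct.smul_tmul']
    | add x y hx hy => rw [smul_add, map_add, hx, hy, map_add, smul_add]
  have hitersmul : ∀ (e : ℕ) (c : k) (x : M ⊗[k] N),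
      (⇑ρT)^[e] (c • x) = c ^ p ^ e • (⇑ρT)^[e] x := by
    intro e
    induction e with
    | zero => intro c x; simp
    | succ e ih =>
        intro c x
        rw [Function.iterate_succ_apply, hsmul, ih, Function.iterate_succ_apply,
          ← pow_mul, ← pow_succ']
  -- eventually-zero is stable
  have hstable : ∀ (x : M ⊗[k] N) (e e' : ℕ), e ≤ e' → (⇑ρT)^[e] x = 0 →
      (⇑ρT)^[e'] x = 0 := by
    intro x e e' he h
    obtain ⟨d, rfl⟩ := Nat.exists_eq_add_of_le he
    rw [add_comm, Function.iterate_add_apply, h, Function.iterate_fixed (map_zero ρT)]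
  ext t
  simp only [Set.mem_setOf_eq, Set.mem_inter_iff]
  constructor
  · rintro ⟨x, hx, hnz⟩
    by_contra hcon
    rw [not_and_or] at hcon
    have key : ∀ y ∈ Submodule.span k
        {y : M ⊗[k] N | ∃ m ∈ MG t, ∃ n ∈ NG t, y = m ⊗ₜ[k] n},
        ∃ e, (⇑ρT)^[e] y = 0 := by
      intro y hy
      rcases hcon with h | h
      · push_neg at h
        induction hy using Submodule.span_induction with
        | mem y hy =>
            obtain ⟨m, hm, n, hn, rfl⟩ := hy
            obtain ⟨e, he⟩ := h m hm
            exact ⟨e, by rw [hiter, he, TensorProduct.zero_tmul]⟩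
        | zero => exact ⟨0, rfl⟩
        | add y z _ _ hy hz =>
            obtain ⟨e1, h1⟩ := hy
            obtain ⟨e2, h2⟩ := hz
            refine ⟨max e1 e2, ?_⟩
            rw [iterate_map_add, hstable y e1 _ (le_max_left _ _) h1,
              hstable z e2 _ (le_max_right _ _) h2, add_zero]
        | smul c y _ hy =>
            obtain ⟨e, he⟩ := hy
            exact ⟨e, by rw [hitersmul, he, smul_zero]⟩
      · push_neg at h
        induction hy using Submodule.span_induction with
        | mem y hy =>
            obtain ⟨m, hm, n, hn, rfl⟩ := hy
            obtain ⟨e, he⟩ := h n hn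
            exact ⟨e, by rw [hiter, he, TensorProduct.tmul_zero]⟩
        | zero => exact ⟨0, rfl⟩
        | add y z _ _ hy hz =>
            obtain ⟨e1, h1⟩ := hy
            obtain ⟨e2, h2⟩ := hz
            refine ⟨max e1 e2, ?_⟩
            rw [iterate_map_add, hstable y e1 _ (le_max_left _ _) h1,
              hstable z e2 _ (le_max_right _ _) h2, add_zero]
        | smul c y _ hy =>
            obtain ⟨e, he⟩ := hy
            exact ⟨e, by rw [hitersmul, he, smul_zero]⟩
    obtain ⟨e, he⟩ := key x hx
    exact hnz e he
  · rintro ⟨⟨m, hm, hme⟩, ⟨n, hn, hne⟩⟩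
    refine ⟨m ⊗ₜ[k] n, Submodule.subset_span ⟨m, hm, n, hn, rfl⟩, fun e => ?_⟩
    rw [hiter]
    exact aux_tmul_ne_zero (hme e) (hne e)
end

section
/- Let k be a field of characteristic p with p > d, n ≥ 2, and p ≡ -1 (mod d). In R = k[x_0,…,x_n]/(x_0^d + ⋯ + x_{n-1}^d − x_n^d), for any tuple (i_0,…,i_n) of positive integers with i_0 + ⋯ + i_n = d, the Frobenius image of the Čech class η = [x_n^{d−i_n} / (x_0^{i_0}⋯x_{n-1}^{i_{n-1}})] in H^n_m(R) is zero: there do not exist nonnegative integers j_0,…,j_{n-1} with j_0+⋯+j_{n-1} = ((d−i_n)p − i_n)/d and d·j_t < p·i_t for all t. -/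
/-- Combinatorial core of the nilpotence in degree 0 of the top local cohomology of the
Fermat hypersurface `x_0^d + ⋯ + x_{n-1}^d - x_n^d`: for `p > d`, `n ≥ 2`,
`p ≡ -1 (mod d)`, and positive integers `i_0, …, i_n` summing to `d`, with
`r = ((d - i_n) p - i_n)/d`, there is no tuple `(j_0, …, j_{n-1})` of nonnegative
integers summing to `r` with `d j_t < p i_t` for all `t`. -/
theorem stmt_16 (p d n r : ℕ) (hp : p.Prime) (hpd : d < p) (hn : 2 ≤ n)
    (hmod : (p + 1) % d = 0)
    (i : Fin (n + 1) → ℕ) (hi : ∀ t, 1 ≤ i t) (hsum : ∑ t, i t = d)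
    (hr : d * r + i (Fin.last n) = (d - i (Fin.last n)) * p) :
    ¬ ∃ j : Fin n → ℕ, (∑ t, j t = r) ∧ ∀ t : Fin n, d * j t < p * i t.castSucc := by
  rintro ⟨j, hj1, hj2⟩
  have hd : n + 1 ≤ d := by
    calc n + 1 = ∑ _t : Fin (n+1), 1 := by simp
    _ ≤ ∑ t, i t := Finset.sum_le_sum fun t _ => hi t
    _ = d := hsum
  have hS : ∑ t : Fin n, i t.castSucc + i (Fin.last n) = d := by
    rw [← hsum, Fin.sum_univ_castSucc]
  have hdvd : d ∣ p + 1 := Nat.dvd_of_mod_eq_zero hmod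
  have key : ∀ t : Fin n, d * j t + d ≤ p * i t.castSucc + i t.castSucc := by
    intro t
    obtain ⟨m, hm⟩ : d ∣ p * i t.castSucc + i t.castSucc := by
      have h := hdvd.mul_right (i t.castSucc)
      have : (p + 1) * i t.castSucc = p * i t.castSucc + i t.castSucc := by ring
      rwa [this] at h
    have h1 : d * j t < d * m := by have := hj2 t; omega
    have h2 : j t < m := by
      by_contra h
      exact absurd (Nat.mul_le_mul_left d (not_lt.mp h)) (not_le.mpr h1)
    have h3 : d * (j t + 1) ≤ d * m := Nat.mul_le_mul_left d h2
    rw [Nat.mul_add, Nat.mul_one] at h3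
    omega
  have hsumle : ∑ t : Fin n, (d * j t + d) ≤ ∑ t : Fin n, (p * i t.castSucc + i t.castSucc) :=
    Finset.sum_le_sum fun t _ => key t
  rw [Finset.sum_add_distrib, Finset.sum_add_distrib, ← Finset.mul_sum, ← Finset.mul_sum,
    hj1] at hsumle
  simp only [Finset.sum_const, Finset.card_univ, Fintype.card_fin, smul_eq_mul] at hsumle
  have hin : i (Fin.last n) ≥ 1 := hi _
  have hr' : d * r + i (Fin.last n) = (∑ t : Fin n, i t.castSucc) * p := by
    rw [hr]; congr 1; omega
  nlinarith [hsumle, hS, hr', hd, hn]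
end

section
/- Let R be a standard graded ring over a field k of characteristic p with homogeneous system of parameters x_1,…,x_d all of degree 1, and x = x_1⋯x_d. A degree-0 class η = [z + (x_1^t,…,x_d^t)] in the top local cohomology H^d_m(R) ≅ colim_t R/(x_1^t,…,x_d^t) (where deg z = dt) is killed by some power of the natural Frobenius action if and only if there exists s ≥ 0 with z ∈ ((x_1^{t+s},…,x_d^{t+s})^F : x^s), where J^F denotes the Frobenius closure of J. Consequently, if for every t one has R_{dt} ⊆ ((x_1^{t+s},…,x_d^{t+s})^F : x^s) for some s, then H^d_m(R) is nilpotent in degree 0. -/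
/-- Let `R` be standard graded over a field `k` of characteristic `p`, with a homogeneous
system of parameters `x_1, …, x_d` of degree 1 and `x = x_1 ⋯ x_d`. A degree-0 class
`[z + (x̲^t)]` of the top local cohomology (`deg z = dt`) is killed by some power of the
natural Frobenius action (i.e. `∃ e s, x^s z^{p^e} ∈ (x̲^{t p^e + s})`) iff there is
`s ≥ 0` with `z ∈ ((x̲^{t+s})^F : x^s)` (i.e. `∃ s e, (x^s z)^{p^e}` lies in the
`p^e`-th bracket power of `(x̲^{t+s})`). Consequently, if for every `t` one has
`R_{dt} ⊆ ((x̲^{t+s})^F : x^s)` for some `s`, then `H^d_m(R)` is nilpotent in degree 0. -/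
theorem stmt_17 {k R : Type*} [Field k] [CommRing R] [Algebra k R]
    (p : ℕ) [Fact p.Prime] [CharP R p]
    (𝒜 : ℕ → Submodule k R) [GradedAlgebra 𝒜]
    (d : ℕ) (x : Fin d → R) (hx : ∀ i, x i ∈ 𝒜 1) :
    (∀ (t : ℕ) (z : R), z ∈ 𝒜 (d * t) →
      ((∃ e s : ℕ, (∏ i, x i) ^ s * z ^ p ^ e ∈
          Ideal.span (Set.range fun i => x i ^ (t * p ^ e + s))) ↔
        (∃ s e : ℕ, ((∏ i, x i) ^ s * z) ^ p ^ e ∈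
          Ideal.span ((fun a : R => a ^ p ^ e) ''
            ((Ideal.span (Set.range fun i => x i ^ (t + s)) : Ideal R) : Set R))))) ∧
      ((∀ t : ℕ, ∃ s : ℕ, ∀ z ∈ 𝒜 (d * t), ∃ e : ℕ,
          ((∏ i, x i) ^ s * z) ^ p ^ e ∈
            Ideal.span ((fun a : R => a ^ p ^ e) ''
              ((Ideal.span (Set.range fun i => x i ^ (t + s)) : Ideal R) : Set R))) →
        ∀ t : ℕ, ∀ z ∈ 𝒜 (d * t), ∃ e s : ℕ,
          (∏ i, x i) ^ s * z ^ p ^ e ∈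
            Ideal.span (Set.range fun i => x i ^ (t * p ^ e + s))) := by
  have hp : 0 < p := (Fact.out : p.Prime).pos
  haveI : ExpChar R p := ExpChar.prime Fact.out
  have main : ∀ (t : ℕ) (z : R),
      ((∃ e s : ℕ, (∏ i, x i) ^ s * z ^ p ^ e ∈
          Ideal.span (Set.range fun i => x i ^ (t * p ^ e + s))) ↔
        (∃ s e : ℕ, ((∏ i, x i) ^ s * z) ^ p ^ e ∈
          Ideal.span ((fun a : R => a ^ p ^ e) ''
            ((Ideal.span (Set.range fun i => x i ^ (t + s)) : Ideal R) : Set R)))) := by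
    intro t z
    constructor
    · rintro ⟨e, s, h⟩
      refine ⟨s, e, ?_⟩
      obtain ⟨m, hm⟩ : ∃ m, p ^ e = m + 1 :=
        ⟨p ^ e - 1, (Nat.succ_pred_eq_of_pos (pow_pos hp e)).symm⟩
      have key : ((∏ i, x i) ^ s * z) ^ p ^ e
          = (∏ i, x i) ^ (s * m) * ((∏ i, x i) ^ s * z ^ p ^ e) := by
        have hsq : s * p ^ e = s * m + s := by rw [hm]; ring
        rw [mul_pow, ← pow_mul, hsq, pow_add, mul_assoc]
      rw [key]
      -- it suffices to multiply each generator of `(x̲^{t p^e + s})` by `x^{s m}`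
      refine Submodule.span_induction
        (p := fun a _ => (∏ i, x i) ^ (s * m) * a ∈
          Ideal.span ((fun a : R => a ^ p ^ e) ''
            ((Ideal.span (Set.range fun i => x i ^ (t + s)) : Ideal R) : Set R)))
        ?_ ?_ ?_ ?_ h
      · rintro a ⟨j, rfl⟩
        have hX : (∏ i, x i) ^ (s * m) = ∏ i, x i ^ (s * m) := by
          rw [Finset.prod_pow]
        have hfac : (∏ i, x i) ^ (s * m) * x j ^ (t * p ^ e + s)
            = (∏ i ∈ Finset.univ.erase j, x i ^ (s * m)) * (x j ^ (t + s)) ^ p ^ e := by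
          rw [hX, ← Finset.mul_prod_erase Finset.univ _ (Finset.mem_univ j), ← pow_mul]
          have h2 : t * p ^ e + s + s * m = (t + s) * p ^ e := by rw [hm]; ring
          rw [← h2]
          ring
        rw [hfac]
        refine Ideal.mul_mem_left _ _ (Ideal.subset_span ?_)
        exact ⟨x j ^ (t + s), Ideal.subset_span ⟨j, rfl⟩, rfl⟩
      · simp
      · intro a b _ _ ha hb
        rw [mul_add]; exact Ideal.add_mem _ ha hb
      · intro a b _ hb
        rw [smul_eq_mul, mul_comm a b, ← mul_assoc]
        exact Ideal.mul_mem_right a _ hb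
    · rintro ⟨s, e, h⟩
      refine ⟨e, s * p ^ e, ?_⟩
      have key : ((∏ i, x i) ^ s * z) ^ p ^ e
          = (∏ i, x i) ^ (s * p ^ e) * z ^ p ^ e := by
        rw [mul_pow, pow_mul]
      rw [key] at h
      -- the `p^e`-th bracket power of `(x̲^{t+s})` is contained in `(x̲^{(t+s) p^e})`
      refine Ideal.span_le.mpr ?_ h
      rintro _ ⟨a, ha, rfl⟩
      have ha' : iterateFrobenius R p e a ∈
          (Ideal.span (Set.range fun i => x i ^ (t + s))).map (iterateFrobenius R p e) :=
        Ideal.mem_map_of_mem _ ha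
      rw [Ideal.map_span] at ha'
      simp only [iterateFrobenius_def] at ha'
      refine Ideal.span_le.mpr ?_ ha'
      rintro _ ⟨_, ⟨j, rfl⟩, rfl⟩
      refine Ideal.subset_span ⟨j, ?_⟩
      show x j ^ (t * p ^ e + s * p ^ e) = (x j ^ (t + s)) ^ p ^ e
      rw [← pow_mul]
      congr 1
      ring
  refine ⟨fun t z _ => main t z, fun H t z hz => ?_⟩
  obtain ⟨s, hs⟩ := H t
  obtain ⟨e, he⟩ := hs z hz
  exact (main t z).mpr ⟨s, e, he⟩
end

section
/- Let R be a ℤ-graded module over a graded ring with a graded Frobenius action ρ, and suppose every graded piece M_n is a finite-dimensional k-vector space. Then exactly one of the following holds: (1) nilsupp(M) = ∅ (M is nilpotent); (2) nilsupp(M) = {0} (M/0^ρ_M is concentrated in degree 0, hence of finite length); (3) nilsupp(M) is infinite. -/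
/-- Trichotomy for the nil-support of a ℤ-graded module with graded Frobenius action
whose graded pieces are finite-dimensional: the nil-support is empty (the module is
nilpotent), equal to `{0}` (generalized nilpotent but not nilpotent), or infinite. -/
theorem stmt_18 {k M : Type*} [Field k] (p : ℕ) [Fact p.Prime] [CharP k p]
    [AddCommGroup M] [Module k M]
    (MG : ℤ → Submodule k M) (ρ : M →+ M)
    (hρ : ∀ (c : k) (m : M), ρ (c • m) = c ^ p • ρ m)
    (hcomp : ∀ (t : ℤ), ∀ m ∈ MG t, ρ m ∈ MG (t * (p : ℤ)))
    (hfd : ∀ t : ℤ, FiniteDimensional k (MG t)) :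
    {t : ℤ | ∃ m ∈ MG t, ∀ e : ℕ, (⇑ρ)^[e] m ≠ 0} = ∅ ∨
      {t : ℤ | ∃ m ∈ MG t, ∀ e : ℕ, (⇑ρ)^[e] m ≠ 0} = {0} ∨
      {t : ℤ | ∃ m ∈ MG t, ∀ e : ℕ, (⇑ρ)^[e] m ≠ 0}.Infinite := by
  set S := {t : ℤ | ∃ m ∈ MG t, ∀ e : ℕ, (⇑ρ)^[e] m ≠ 0} with hS
  -- S is closed under multiplication by p
  have hclosed : ∀ t ∈ S, t * (p : ℤ) ∈ S := by
    intro t ht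
    obtain ⟨m, hm, hne⟩ := ht
    exact ⟨ρ m, hcomp t m hm, fun e => by
      have := hne (e + 1)
      rwa [Function.iterate_succ_apply] at this⟩
  by_cases h0 : S = ∅
  · exact Or.inl h0
  by_cases h1 : S ⊆ {0}
  · refine Or.inr (Or.inl (subset_antisymm h1 ?_))
    obtain ⟨t, ht⟩ := Set.nonempty_iff_ne_empty.mpr h0
    intro x hx
    obtain rfl : x = 0 := hx
    rwa [Set.mem_singleton_iff.mp (h1 ht)] at ht
  · right; right
    obtain ⟨t, htS, ht0⟩ : ∃ t ∈ S, t ≠ 0 := by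
      by_contra h
      push_neg at h
      exact h1 fun x hx => h x hx
    have hp1 : (1 : ℤ) < (p : ℤ) := by exact_mod_cast (Fact.out : p.Prime).one_lt
    have key : ∀ e : ℕ, t * (p : ℤ) ^ e ∈ S := by
      intro e
      induction e with
      | zero => simpa using htS
      | succ n ih =>
        have := hclosed _ ih
        rwa [mul_assoc, ← pow_succ] at this
    apply Set.infinite_of_injective_forall_mem (f := fun e : ℕ => t * (p : ℤ) ^ e)
    · intro a b hab
      have : (p : ℤ) ^ a = (p : ℤ) ^ b := mul_left_cancel₀ ht0 hab
      exact Nat.pow_right_injective (Fact.out : p.Prime).two_le (by exact_mod_cast this)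
    · exact key
end

section
/- Let 0 → A → B → C → 0 be a short exact sequence of finitely generated modules with Frobenius actions over a local ring (R,m) of characteristic p, with Frobenius-equivariant maps, and define F-depth of a module M as the least j such that the induced Frobenius action on the local cohomology H^j_m(M) is not nilpotent. Then F-depth(A) ≥ min{F-depth(B), F-depth(C) + 1}. -/
/-- The F-depth of a family of cohomology modules with Frobenius actions: the least index
`j` (in `ℕ∞`) such that the action on the `j`-th module is not nilpotent. -/
noncomputable def FDepth (H : ℕ → Type*) [∀ j, AddCommGroup (H j)]
    (ρ : ∀ j, H j →+ H j) : ℕ∞ :=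
  sInf {e : ℕ∞ | ∃ j : ℕ, e = (j : ℕ∞) ∧ ¬ ∀ m : H j, ∃ k : ℕ, (⇑(ρ j))^[k] m = 0}

/-- Given a short exact sequence `0 → A → B → C → 0` of finitely generated modules with
Frobenius actions over a local ring of characteristic `p`, encoded by its Frobenius-
equivariant long exact sequence of local cohomology modules
`⋯ → H^j(A) →α H^j(B) →β H^j(C) →δ H^{j+1}(A) → ⋯` (these are artinian, so all HSL
numbers are finite), one has `F-depth A ≥ min {F-depth B, F-depth C + 1}`. -/
theorem stmt_19 {R : Type*} [CommRing R] [IsLocalRing R] [IsNoetherianRing R]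
    (p : ℕ) [Fact p.Prime] [CharP R p]
    (HA HB HC : ℕ → Type*)
    [∀ j, AddCommGroup (HA j)] [∀ j, AddCommGroup (HB j)] [∀ j, AddCommGroup (HC j)]
    [∀ j, Module R (HA j)] [∀ j, Module R (HB j)] [∀ j, Module R (HC j)]
    (ρA : ∀ j, HA j →+ HA j) (ρB : ∀ j, HB j →+ HB j) (ρC : ∀ j, HC j →+ HC j)
    (hρA : ∀ j (r : R) (m : HA j), ρA j (r • m) = r ^ p • ρA j m)
    (hρB : ∀ j (r : R) (m : HB j), ρB j (r • m) = r ^ p • ρB j m)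
    (hρC : ∀ j (r : R) (m : HC j), ρC j (r • m) = r ^ p • ρC j m)
    (α : ∀ j, HA j →ₗ[R] HB j) (β : ∀ j, HB j →ₗ[R] HC j)
    (δ : ∀ j, HC j →ₗ[R] HA (j + 1))
    (hα : ∀ j (a : HA j), α j (ρA j a) = ρB j (α j a))
    (hβ : ∀ j (b : HB j), β j (ρB j b) = ρC j (β j b))
    (hδ : ∀ j (c : HC j), δ j (ρC j c) = ρA (j + 1) (δ j c))
    (hα0 : Function.Injective (α 0))
    (hex1 : ∀ j, Function.Exact (α j) (β j))
    (hex2 : ∀ j, Function.Exact (β j) (δ j))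
    (hex3 : ∀ j, Function.Exact (δ j) (α (j + 1)))
    (hHSLA : ∀ j, ∃ e : ℕ, ∀ m : HA j,
      (∃ k : ℕ, (⇑(ρA j))^[k] m = 0) → (⇑(ρA j))^[e] m = 0)
    (hHSLB : ∀ j, ∃ e : ℕ, ∀ m : HB j,
      (∃ k : ℕ, (⇑(ρB j))^[k] m = 0) → (⇑(ρB j))^[e] m = 0)
    (hHSLC : ∀ j, ∃ e : ℕ, ∀ m : HC j,
      (∃ k : ℕ, (⇑(ρC j))^[k] m = 0) → (⇑(ρC j))^[e] m = 0) :
    min (FDepth HB ρB) (FDepth HC ρC + 1) ≤ FDepth HA ρA := by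
  refine le_sInf ?_
  rintro e ⟨j, rfl, hj⟩
  by_contra hlt
  rw [not_le] at hlt
  apply hj
  -- commuting of iterates
  have commα : ∀ (k : ℕ) (a : HA j), α j ((⇑(ρA j))^[k] a) = (⇑(ρB j))^[k] (α j a) := by
    intro k
    induction k with
    | zero => intro a; simp
    | succ n ih =>
      intro a
      rw [Function.iterate_succ_apply, ih, hα, Function.iterate_succ_apply]
  -- nilpotence on HB j
  have hBnil : ∀ m : HB j, ∃ k : ℕ, (⇑(ρB j))^[k] m = 0 := by
    by_contra hB'
    have : FDepth HB ρB ≤ (j : ℕ∞) := sInf_le ⟨j, rfl, hB'⟩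
    exact absurd (lt_of_lt_of_le hlt (min_le_left _ _)) (not_lt.mpr this)
  intro a
  obtain ⟨k, hk⟩ := hBnil (α j a)
  have hker : α j ((⇑(ρA j))^[k] a) = 0 := by rw [commα]; exact hk
  match j, hlt, a, hker with
  | 0, hlt, a, hker =>
    exact ⟨k, hα0 (by simpa using hker)⟩
  | (i+1), hlt, a, hker =>
    obtain ⟨c, hc⟩ := (hex3 i _).mp hker
    have hCnil : ∀ m : HC i, ∃ l : ℕ, (⇑(ρC i))^[l] m = 0 := by
      by_contra hC'
      have h1 : FDepth HC ρC ≤ (i : ℕ∞) := sInf_le ⟨i, rfl, hC'⟩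
      have h2 : ((i : ℕ) + 1 : ℕ∞) < FDepth HC ρC + 1 := by
        calc ((i : ℕ) + 1 : ℕ∞) = ((i + 1 : ℕ) : ℕ∞) := by push_cast; ring
        _ < FDepth HC ρC + 1 := lt_of_lt_of_le hlt (min_le_right _ _)
      have h3 : (i : ℕ∞) < FDepth HC ρC := by
        exact lt_of_add_lt_add_right h2
      exact absurd h3 (not_lt.mpr h1)
    obtain ⟨l, hl⟩ := hCnil c
    have commδ : ∀ (l : ℕ) (c : HC i),
        δ i ((⇑(ρC i))^[l] c) = (⇑(ρA (i+1)))^[l] (δ i c) := by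
      intro l
      induction l with
      | zero => intro c; simp
      | succ n ih =>
        intro c
        rw [Function.iterate_succ_apply, ih, hδ, Function.iterate_succ_apply]
    refine ⟨l + k, ?_⟩
    rw [Function.iterate_add_apply, ← hc, ← commδ, hl, map_zero]
end
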